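/- arXiv:2002.09421 — 2 statements merged into one kernel-verified Lean document; each statement's English description precedes it below -/
import Mathlib

section
/- The recursive rule is equivariant under permutations: for any 1D node family X, any multi-index α of length d+1, and any permutation σ of {0,...,d}, one has b_X(σ(α)) = σ(b_X(α)), where σ acts on tuples by permuting coordinates. -/
/-! By induction on `d`. Relabelling the coordinates by `σ` sends the face opposite vertex `i`
to the face opposite `σ i`, and the multi-index restricted to that face is relabelled by the
permutation `σ.succAboveConj i` of `Fin d` that `σ` induces between the two faces. So after
reindexing both sums of the recursion by `σ`, the induction hypothesis applies term by term;
the weights `x_{|α|, |α| - α_i}` only depend on `|α|`, which is `σ`-invariant, and on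
`α_i`. -/

open scoped BigOperators

/-- The recursively defined barycentric node `b_X(α)` for a multi-index
`α : Fin (d+1) → ℕ`, built from a 1D node family `X` (where `X n i = x_{n,i}`). -/
noncomputable def recNode (X : ℕ → ℕ → ℝ) : (d : ℕ) → (Fin (d + 1) → ℕ) → (Fin (d + 1) → ℝ)
  | 0, _ => fun _ => 1
  | d + 1, α => fun k =>
      (∑ i : Fin (d + 2),
          X (∑ j, α j) ((∑ j, α j) - α i) *
            ((Fin.insertNth i (0 : ℝ) (recNode X d (α ∘ Fin.succAbove i)) : Fin (d + 2) → ℝ) k)) /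
      (∑ i : Fin (d + 2), X (∑ j, α j) ((∑ j, α j) - α i))

namespace Equiv.Perm

variable {n : ℕ}

def succAboveConj (σ : Perm (Fin (n + 1))) (i : Fin (n + 1)) : Perm (Fin n) :=
  (finSuccAboveEquiv i).trans <|
    (σ.subtypeEquiv (q := (· ≠ σ i)) fun _ => σ.injective.ne_iff.symm).trans
      (finSuccAboveEquiv (σ i)).symm

theorem succAbove_succAboveConj (σ : Perm (Fin (n + 1))) (i : Fin (n + 1)) (j : Fin n) :
    (σ i).succAbove (σ.succAboveConj i j) = σ (i.succAbove j) :=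
  congrArg Subtype.val <| (finSuccAboveEquiv (σ i)).apply_symm_apply
    ⟨σ (i.succAbove j), σ.injective.ne (i.succAbove_ne j)⟩

theorem symm_comp_succAbove (σ : Perm (Fin (n + 1))) (i : Fin (n + 1)) :
    σ.symm ∘ (σ i).succAbove = i.succAbove ∘ (σ.succAboveConj i).symm := by
  funext j
  rw [Function.comp_apply, Function.comp_apply, σ.symm_apply_eq,
    ← σ.succAbove_succAboveConj i, apply_symm_apply]

theorem insertNth_comp_symm {β : Type*} (σ : Perm (Fin (n + 1))) (i : Fin (n + 1)) (x : β)
    (v : Fin n → β) :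
    Fin.insertNth i x v ∘ σ.symm = Fin.insertNth (σ i) x (v ∘ (σ.succAboveConj i).symm) := by
  funext k
  induction k using Fin.succAboveCases (σ i) with
  | x => simp
  | p j =>
    rw [Function.comp_apply, ← Function.comp_apply (f := σ.symm), symm_comp_succAbove]
    simp

end Equiv.Perm

theorem recNode_perm_equivariant_general
    (X : ℕ → ℕ → ℝ)
    (d : ℕ) (α : Fin (d + 1) → ℕ) (σ : Equiv.Perm (Fin (d + 1))) :
    recNode X d (α ∘ ⇑σ.symm) = (recNode X d α) ∘ ⇑σ.symm := by
  induction d with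
  | zero => rfl
  | succ d ih =>
    have hface (i : Fin (d + 2)) :
        Fin.insertNth (σ i) 0 (recNode X d ((α ∘ σ.symm) ∘ (σ i).succAbove)) =
          Fin.insertNth i (0 : ℝ) (recNode X d (α ∘ i.succAbove)) ∘ σ.symm := by
      rw [Function.comp_assoc, σ.symm_comp_succAbove, ← Function.comp_assoc, ih,
        σ.insertNth_comp_symm]
    funext k
    have hsum : ∑ j, (α ∘ σ.symm) j = ∑ j, α j := σ.symm.sum_comp α
    simp only [recNode, hsum]
    rw [← Equiv.sum_comp σ, ← Equiv.sum_comp σ (fun i => X _ (_ - (α ∘ σ.symm) i))]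
    simp only [Function.comp_apply, Equiv.symm_apply_apply, hface]

/-- the recursive rule is equivariant under permutations of the
barycentric coordinates: `b_X(σ(α)) = σ(b_X(α))`, where `(σ·v) i = v (σ⁻¹ i)`. -/
theorem recNode_perm_equivariant
    (X : ℕ → ℕ → ℝ)
    (hIcc : ∀ n i, i ≤ n → X n i ∈ Set.Icc (0 : ℝ) 1)
    (hmono : ∀ n i j, i < j → j ≤ n → X n i < X n j)
    (hsym : ∀ n i, i ≤ n → X n i = 1 - X n (n - i))
    (d : ℕ) (α : Fin (d + 1) → ℕ) (σ : Equiv.Perm (Fin (d + 1))) :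
    recNode X d (α ∘ ⇑σ.symm) = (recNode X d α) ∘ ⇑σ.symm :=
  recNode_perm_equivariant_general X d α σ
end

section
/- Boundary trace property (general): let X be a 1D node family with x_{n,0} = 0 and x_{n,n} = 1 for all n ≥ 1. For any multi-index α of length d+1 ≥ 2 with |α| ≥ 1 and α_j = 0, one has b_X(α) = (b_X(α_{\j}))_{+j}. That is, nodes with a zero multi-index entry lie on the corresponding facet and equal the lower-dimensional recursive node mapped onto that facet. -/
open scoped BigOperators

/-!
Write `n = |α|` and `wᵢ = x_{n, n - αᵢ}` for the weight of the `i`-th facet. If `α_j = 0`, then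
`w_j = x_{n,n} = 1`, and every other facet `i` either has weight `x_{n,0} = 0` (when all the mass of
`α` sits at `i`) or contributes the node of `α_{\i}`, which by induction lies on the facet `j`
and is obtained from `α_{\j\i}` by inserting the two zero coordinates in the other order.
The weights of `α_{\j}` are those of `α` at `i ≠ j`, so these contributions add up to
`(∑_{i ≠ j} wᵢ) • (b_X(α_{\j}))_{+j}`, and the normalisation leaves `(b_X(α_{\j}))_{+j}`.
-/

open Finset

namespace Fin

variable {n : ℕ}

theorem insertNth_succAbove_insertNth_predAbove {β : Type*} (j : Fin (n + 2)) (i : Fin (n + 1))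
    (a b : β) (g : Fin n → β) :
    (insertNth (j.succAbove i) a (insertNth (i.predAbove j) b g : Fin (n + 1) → β) :
        Fin (n + 2) → β) =
      insertNth j b (insertNth i a g : Fin (n + 1) → β) := by
  refine insertNth_eq_iff.2 ⟨by simp, (insertNth_eq_iff.2 ⟨?_, ?_⟩)⟩
  · simp [removeNth_apply, succAbove_succAbove_predAbove]
  · rw [← removeNth_removeNth_eq_swap]
    simp

variable {R M : Type*} [Semiring R] [AddCommMonoid M] [Module R M]

theorem insertNth_zero_smul (j : Fin (n + 1)) (c : R) (f : Fin n → M) :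
    (insertNth j (0 : M) (c • f) : Fin (n + 1) → M) = c • insertNth j 0 f := by
  ext k
  cases k using succAboveCases j <;> simp

theorem insertNth_zero_sum {ι : Type*} (j : Fin (n + 1)) (s : Finset ι) (f : ι → Fin n → M) :
    (insertNth j (0 : M) (∑ i ∈ s, f i) : Fin (n + 1) → M) = ∑ i ∈ s, insertNth j 0 (f i) := by
  ext k
  cases k using succAboveCases j <;> simp [Finset.sum_apply]

end Fin

/-- The weight `x_{|α|, |α_{\i}|}` of the facet `i` in the recursion defining `recNode`. -/
noncomputable def nodeWeight (X : ℕ → ℕ → ℝ) {m : ℕ} (α : Fin m → ℕ) (i : Fin m) : ℝ :=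
  X (∑ k, α k) (∑ k, α k - α i)

section NodeWeight

variable {X : ℕ → ℕ → ℝ} {m : ℕ}

theorem nodeWeight_nonneg (hX : ∀ n i, i ≤ n → 0 ≤ X n i) (α : Fin m → ℕ) (i : Fin m) :
    0 ≤ nodeWeight X α i :=
  hX _ _ (Nat.sub_le _ _)

theorem nodeWeight_eq_one (h1 : ∀ n, 1 ≤ n → X n n = 1) {α : Fin m → ℕ} (hα : 1 ≤ ∑ k, α k)
    {j : Fin m} (hj : α j = 0) : nodeWeight X α j = 1 := by
  rw [nodeWeight, hj, Nat.sub_zero, h1 _ hα]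

theorem nodeWeight_eq_zero (h0 : ∀ n, 1 ≤ n → X n 0 = 0) {α : Fin (m + 1) → ℕ}
    (hα : 1 ≤ ∑ k, α k) {i : Fin (m + 1)} (hi : ∑ k, α (i.succAbove k) = 0) :
    nodeWeight X α i = 0 := by
  have hsum := Fin.sum_univ_succAbove α i
  rw [nodeWeight, show ∑ k, α k - α i = 0 by omega, h0 _ hα]

theorem nodeWeight_comp_succAbove {α : Fin (m + 1) → ℕ} {j : Fin (m + 1)} (hj : α j = 0)
    (i : Fin m) : nodeWeight X (α ∘ j.succAbove) i = nodeWeight X α (j.succAbove i) := by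
  simp [nodeWeight, Fin.sum_univ_succAbove α j, hj]

end NodeWeight

section RecNode

variable {X : ℕ → ℕ → ℝ} {d : ℕ}

theorem recNode_succ (α : Fin (d + 2) → ℕ) :
    recNode X (d + 1) α = (∑ i, nodeWeight X α i)⁻¹ •
      ∑ i, nodeWeight X α i • (Fin.insertNth i (0 : ℝ) (recNode X d (α ∘ i.succAbove)) :
        Fin (d + 2) → ℝ) := by
  ext k
  simp [recNode, nodeWeight, Finset.sum_apply, div_eq_inv_mul]

/-- Also when the weights sum to `0` (where `recNode` divides by zero): being nonnegative, they
then all vanish and both sides are `0`. -/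
theorem sum_nodeWeight_smul_recNode (hX : ∀ n i, i ≤ n → 0 ≤ X n i) (α : Fin (d + 2) → ℕ) :
    (∑ i, nodeWeight X α i) • recNode X (d + 1) α =
      ∑ i, nodeWeight X α i • (Fin.insertNth i (0 : ℝ) (recNode X d (α ∘ i.succAbove)) :
        Fin (d + 2) → ℝ) := by
  rw [recNode_succ, smul_smul]
  by_cases hS : ∑ i, nodeWeight X α i = 0
  · rw [Finset.sum_eq_zero_iff_of_nonneg fun i _ => nodeWeight_nonneg hX α i] at hS
    simp [hS]
  · rw [mul_inv_cancel₀ hS, one_smul]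

theorem recNode_eq_insertNth_of_sum_succAbove (hX : ∀ n i, i ≤ n → 0 ≤ X n i)
    (h1 : ∀ n, 1 ≤ n → X n n = 1) {α : Fin (d + 2) → ℕ} (hα : 1 ≤ ∑ k, α k) {j : Fin (d + 2)}
    (hj : α j = 0)
    (hrest : ∑ i, nodeWeight X α (j.succAbove i) •
        (Fin.insertNth (j.succAbove i) (0 : ℝ) (recNode X d (α ∘ (j.succAbove i).succAbove)) :
          Fin (d + 2) → ℝ) =
      (∑ i, nodeWeight X α (j.succAbove i)) •
        (Fin.insertNth j (0 : ℝ) (recNode X d (α ∘ j.succAbove)) : Fin (d + 2) → ℝ)) :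
    recNode X (d + 1) α = Fin.insertNth j (0 : ℝ) (recNode X d (α ∘ j.succAbove)) := by
  have hpos : 0 < 1 + ∑ i, nodeWeight X α (j.succAbove i) :=
    add_pos_of_pos_of_nonneg one_pos (sum_nonneg fun i _ => nodeWeight_nonneg hX α _)
  rw [recNode_succ, Fin.sum_univ_succAbove _ j, Fin.sum_univ_succAbove _ j, hrest,
    nodeWeight_eq_one h1 hα hj, ← add_smul, inv_smul_smul₀ hpos.ne']

theorem nodeWeight_succAbove_eq_zero_of_fin_two (h0 : ∀ n, 1 ≤ n → X n 0 = 0)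
    {α : Fin 2 → ℕ} (hα : 1 ≤ ∑ k, α k) {j : Fin 2} (hj : α j = 0) (i : Fin 1) :
    nodeWeight X α (j.succAbove i) = 0 := by
  refine nodeWeight_eq_zero h0 hα ?_
  rw [Fin.sum_univ_one, Subsingleton.elim 0 (i.predAbove j), Fin.succAbove_succAbove_predAbove, hj]

theorem nodeWeight_smul_insertNth_recNode_of_trace (h0 : ∀ n, 1 ≤ n → X n 0 = 0)
    (htrace : ∀ β : Fin (d + 2) → ℕ, 1 ≤ ∑ k, β k → ∀ k, β k = 0 →
      recNode X (d + 1) β = Fin.insertNth k (0 : ℝ) (recNode X d (β ∘ k.succAbove)))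
    {α : Fin (d + 3) → ℕ} (hα : 1 ≤ ∑ k, α k) {j : Fin (d + 3)} (hj : α j = 0) (i : Fin (d + 2)) :
    nodeWeight X α (j.succAbove i) •
        (Fin.insertNth (j.succAbove i) (0 : ℝ)
          (recNode X (d + 1) (α ∘ (j.succAbove i).succAbove)) : Fin (d + 3) → ℝ) =
      nodeWeight X α (j.succAbove i) •
        (Fin.insertNth j (0 : ℝ) (Fin.insertNth i (0 : ℝ)
          (recNode X d (α ∘ j.succAbove ∘ i.succAbove)) : Fin (d + 2) → ℝ)) := by
  by_cases hs : ∑ k, α ((j.succAbove i).succAbove k) = 0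
  · rw [nodeWeight_eq_zero h0 hα hs, zero_smul, zero_smul]
  have hk : (α ∘ (j.succAbove i).succAbove) (i.predAbove j) = 0 := by
    simpa [Fin.succAbove_succAbove_predAbove] using hj
  rw [htrace _ (by simpa [Nat.one_le_iff_ne_zero] using hs) _ hk,
    Fin.insertNth_succAbove_insertNth_predAbove]
  simp [Function.comp_def, Fin.succAbove_succAbove_succAbove_predAbove]

end RecNode

theorem recNode_trace_general
    (X : ℕ → ℕ → ℝ)
    (hIcc : ∀ n i, i ≤ n → X n i ∈ Set.Icc (0 : ℝ) 1)
    (h0 : ∀ n, 1 ≤ n → X n 0 = 0) (h1 : ∀ n, 1 ≤ n → X n n = 1)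
    (d : ℕ) (α : Fin (d + 2) → ℕ) (hα : 1 ≤ ∑ i, α i)
    (j : Fin (d + 2)) (hj : α j = 0) :
    recNode X (d + 1) α =
      (Fin.insertNth j (0 : ℝ) (recNode X d (α ∘ Fin.succAbove j)) : Fin (d + 2) → ℝ) := by
  have hX : ∀ n i, i ≤ n → 0 ≤ X n i := fun n i h => (hIcc n i h).1
  refine recNode_eq_insertNth_of_sum_succAbove hX h1 hα hj ?_
  induction d with
  | zero => simp [nodeWeight_succAbove_eq_zero_of_fin_two h0 hα hj]
  | succ d ih =>
    calc _ = ∑ i, nodeWeight X α (j.succAbove i) •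
            (Fin.insertNth j (0 : ℝ) (Fin.insertNth i (0 : ℝ)
              (recNode X d (α ∘ j.succAbove ∘ i.succAbove)) : Fin (d + 2) → ℝ)) :=
          sum_congr rfl fun i _ => nodeWeight_smul_insertNth_recNode_of_trace h0
            (fun β hβ k hk => recNode_eq_insertNth_of_sum_succAbove hX h1 hβ hk (ih β hβ k hk))
            hα hj i
      _ = Fin.insertNth j (0 : ℝ) ((∑ i, nodeWeight X (α ∘ j.succAbove) i) •
            recNode X (d + 1) (α ∘ j.succAbove)) := by
          simp_rw [sum_nodeWeight_smul_recNode hX, Fin.insertNth_zero_sum,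
            Fin.insertNth_zero_smul, nodeWeight_comp_succAbove hj, Function.comp_assoc]
      _ = _ := by
          rw [Fin.insertNth_zero_smul]
          simp_rw [nodeWeight_comp_succAbove hj]

/-- boundary trace property (general): for a 1D node family with
`x_{n,0} = 0` and `x_{n,n} = 1`, if `α_j = 0` then `b_X(α) = (b_X(α_{\j}))_{+j}`. -/
theorem recNode_trace
    (X : ℕ → ℕ → ℝ)
    (hIcc : ∀ n i, i ≤ n → X n i ∈ Set.Icc (0 : ℝ) 1)
    (hmono : ∀ n i j, i < j → j ≤ n → X n i < X n j)
    (hsym : ∀ n i, i ≤ n → X n i = 1 - X n (n - i))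
    (h0 : ∀ n, 1 ≤ n → X n 0 = 0) (h1 : ∀ n, 1 ≤ n → X n n = 1)
    (d : ℕ) (α : Fin (d + 2) → ℕ) (hα : 1 ≤ ∑ i, α i)
    (j : Fin (d + 2)) (hj : α j = 0) :
    recNode X (d + 1) α =
      (Fin.insertNth j (0 : ℝ) (recNode X d (α ∘ Fin.succAbove j)) : Fin (d + 2) → ℝ) :=
  recNode_trace_general X hIcc h0 h1 d α hα j hj
end
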